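/- arXiv:1405.5304 — 7 statements merged into one kernel-verified Lean document; each statement's English description precedes it below -/
import Mathlib

section
/- If h is bounded from below, i.e. there is a real constant c such that (h u | u) ≥ c‖u‖² for all u ∈ D(h), then there exists a constant c₀ > 0 such that every z ∈ ℂ with |Im z| > |Re z| + c₀ belongs to ρ(h,k), i.e. p(z): D(h) → H is bijective with bounded inverse. -/
/-! Write `z = x + iy`. Since `Re (p(z)u | u) = Re (hu | u) + Re (2 z̄ (ku | u)) - (x² - y²)‖u‖²`
and `y² - x² = (|y| - |x|)(|y| + |x|)` outgrows `2|z|‖k‖` once `|y| > |x| + 2‖k‖ + |c| + 1`, there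
`‖u‖ ≤ ‖p(z)u‖`. Hence `p(z)` is injective with bounded inverse, and its range is closed because
`h` is closed and `p(z) - h` is bounded. The orthogonal complement of the range is the kernel of
`p(z)* = h + 2 z̄ k* - z̄²`, the pencil of `(h, k*)` at `z̄`, which obeys the same estimate since
`‖k*‖ = ‖k‖`; so the range is all of `H`. -/

open Complex

noncomputable section

variable {H : Type*} [NormedAddCommGroup H] [InnerProductSpace ℂ H] [CompleteSpace H]

/-- The quadratic pencil `p(z) = h + z(2k - z) = h + 2z k - z²` acting on the domain of `h`. -/
def pencil (h : H →ₗ.[ℂ] H) (k : H →L[ℂ] H) (z : ℂ) : h.domain →ₗ[ℂ] H :=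
  h.toFun + (2 * z) • (k.toLinearMap.comp h.domain.subtype) - z ^ 2 • h.domain.subtype

/-- `p(z) : D(h) → H` is bijective with bounded inverse. -/
def PencilBijBdd (h : H →ₗ.[ℂ] H) (k : H →L[ℂ] H) (z : ℂ) : Prop :=
  Function.Bijective (pencil h k z) ∧
    ∃ C : ℝ, ∀ v : h.domain, ‖(v : H)‖ ≤ C * ‖pencil h k z v‖

open scoped ComplexConjugate InnerProductSpace NNReal Topology

theorem AntilipschitzWith.cauchySeq_of_comp {α β ι : Type*} [PseudoEMetricSpace α]
    [PseudoEMetricSpace β] [Nonempty ι] [SemilatticeSup ι] {K : ℝ≥0} {f : α → β}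
    (hf : AntilipschitzWith K f) {u : ι → α} (hu : CauchySeq (f ∘ u)) : CauchySeq u := by
  rw [cauchySeq_iff_tendsto, ← Prod.map_comp_map] at hu
  rw [cauchySeq_iff_tendsto]
  exact (Filter.tendsto_comap_iff.2 hu).mono_right hf.comap_uniformity_le

section ClosedRange

variable {𝕜 E F : Type*} [NormedField 𝕜] [NormedAddCommGroup E] [NormedSpace 𝕜 E]
  [CompleteSpace E] [NormedAddCommGroup F] [NormedSpace 𝕜 F]

theorem LinearPMap.IsClosed.isClosed_range_add_of_antilipschitz {T : E →ₗ.[𝕜] F}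
    (hT : T.IsClosed) (B : E →L[𝕜] F) {K : ℝ≥0}
    (hK : AntilipschitzWith K (T.toFun + (B : E →ₗ[𝕜] F).comp T.domain.subtype)) :
    _root_.IsClosed
      (LinearMap.range (T.toFun + (B : E →ₗ[𝕜] F).comp T.domain.subtype) : Set F) := by
  refine isClosed_of_closure_subset fun y hy => ?_
  obtain ⟨f, hf, hfy⟩ := mem_closure_iff_seq_limit.mp hy
  choose u hu using hf
  obtain ⟨x, hx⟩ : ∃ x, Filter.Tendsto (fun n => (u n : E)) Filter.atTop (𝓝 x) :=
    cauchySeq_tendsto_of_complete <| uniformContinuous_subtype_val.comp_cauchySeq <|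
      hK.cauchySeq_of_comp (by simpa only [Function.comp_def, hu] using hfy.cauchySeq)
  have hTu : Filter.Tendsto (fun n => T (u n)) Filter.atTop (𝓝 (y - B x)) := by
    convert hfy.sub ((B.continuous.tendsto x).comp hx) using 2 with n
    simp [← hu n, LinearPMap.toFun_eq_coe]
  obtain ⟨v, rfl, hv⟩ := T.mem_graph_iff.mp <|
    hT.mem_of_tendsto (hx.prodMk_nhds hTu) (.of_forall fun n => T.mem_graph (u n))
  exact ⟨v, by simp [LinearPMap.toFun_eq_coe, hv]⟩

end ClosedRange

section InnerProductSpace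

variable {𝕜 E : Type*} [RCLike 𝕜] [NormedAddCommGroup E] [InnerProductSpace 𝕜 E]

theorem norm_le_of_sq_le_re_inner {u v : E} (huv : ‖u‖ ^ 2 ≤ RCLike.re ⟪v, u⟫_𝕜) : ‖u‖ ≤ ‖v‖ := by
  nlinarith [re_inner_le_norm (𝕜 := 𝕜) v u, norm_nonneg u, norm_nonneg v]

variable [CompleteSpace E]

theorem Submodule.eq_top_of_isClosed_of_orthogonal_eq_bot {K : Submodule 𝕜 E}
    (hK : IsClosed (K : Set E)) (hKo : Kᗮ = ⊥) : K = ⊤ :=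
  have := hK.completeSpace_coe
  Submodule.orthogonal_eq_bot_iff.mp hKo

theorem IsSelfAdjoint.mem_graph_of_inner_eq {A : E →ₗ.[𝕜] E} (hA : IsSelfAdjoint A) {w w' : E}
    (hw : ∀ x : A.domain, ⟪w', x⟫_𝕜 = ⟪w, A x⟫_𝕜) : (w, w') ∈ A.graph := by
  have hm : w ∈ A.adjoint.domain := LinearPMap.mem_adjoint_domain_of_exists _ ⟨w', hw⟩
  have hgraph : (w, w') ∈ A.adjoint.graph := by
    simpa only [LinearPMap.adjoint_apply_eq hA.dense_domain ⟨w, hm⟩ hw] using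
      A.adjoint.mem_graph ⟨w, hm⟩
  rwa [LinearPMap.isSelfAdjoint_def.mp hA] at hgraph

end InnerProductSpace

section Pencil

variable {E : Type*} [NormedAddCommGroup E] [InnerProductSpace ℂ E]
  {h : E →ₗ.[ℂ] E} {k : E →L[ℂ] E} {c : ℝ} {z : ℂ}

@[simp]
theorem pencil_apply (u : h.domain) :
    pencil h k z u = h u + (2 * z) • k u - z ^ 2 • (u : E) := by
  simp [pencil, LinearPMap.toFun_eq_coe]

theorem pencil_eq_add_comp :
    pencil h k z = h.toFun +
      (((2 * z) • k - z ^ 2 • ContinuousLinearMap.id ℂ E : E →L[ℂ] E) : E →ₗ[ℂ] E).comp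
        h.domain.subtype := by
  ext u
  simp [LinearPMap.toFun_eq_coe, add_sub_assoc]

theorem mul_norm_sq_le_re_inner_pencil
    (hbelow : ∀ u : h.domain, c * ‖(u : E)‖ ^ 2 ≤ (⟪h u, (u : E)⟫_ℂ).re) (u : h.domain) :
    (c - 2 * ‖z‖ * ‖k‖ + (z.im ^ 2 - z.re ^ 2)) * ‖(u : E)‖ ^ 2 ≤
      (⟪pencil h k z u, (u : E)⟫_ℂ).re := by
  have hcross : |(⟪(2 * z) • k u, (u : E)⟫_ℂ).re| ≤ 2 * ‖z‖ * ‖k‖ * ‖(u : E)‖ ^ 2 :=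
    calc |(⟪(2 * z) • k u, (u : E)⟫_ℂ).re| ≤ ‖(2 * z) • k u‖ * ‖(u : E)‖ :=
          (abs_re_le_norm _).trans (norm_inner_le_norm _ _)
      _ ≤ 2 * ‖z‖ * (‖k‖ * ‖(u : E)‖) * ‖(u : E)‖ := by
          rw [norm_smul, norm_mul, Complex.norm_two]
          gcongr
          exact k.le_opNorm u
      _ = 2 * ‖z‖ * ‖k‖ * ‖(u : E)‖ ^ 2 := by ring
  have hsquare : (⟪z ^ 2 • (u : E), (u : E)⟫_ℂ).re = (z.re ^ 2 - z.im ^ 2) * ‖(u : E)‖ ^ 2 := by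
    rw [inner_smul_left, inner_self_eq_norm_sq_to_K]
    simp [pow_two]
  rw [pencil_apply, inner_sub_left, inner_add_left, Complex.sub_re, Complex.add_re, hsquare]
  nlinarith [hbelow u, neg_abs_le (⟪(2 * z) • k u, (u : E)⟫_ℂ).re]

theorem one_le_of_abs_re_add_lt_abs_im {K : ℝ} (hK : 0 ≤ K)
    (hz : |z.re| + (2 * K + |c| + 1) < |z.im|) :
    1 ≤ c - 2 * ‖z‖ * K + (z.im ^ 2 - z.re ^ 2) := by
  have hsq : z.im ^ 2 - z.re ^ 2 = (|z.im| - |z.re|) * (|z.im| + |z.re|) := by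
    rw [← sq_abs z.re, ← sq_abs z.im]; ring
  have hgrowth : (2 * K + |c| + 1) * (|z.im| + |z.re|) ≤ z.im ^ 2 - z.re ^ 2 := by
    rw [hsq]
    exact mul_le_mul_of_nonneg_right (by linarith) (by positivity)
  have hone : 1 ≤ |z.im| + |z.re| := by linarith [abs_nonneg z.re, abs_nonneg c]
  nlinarith [mul_le_mul_of_nonneg_left (Complex.norm_le_abs_re_add_abs_im z) hK, neg_abs_le c,
    mul_le_mul_of_nonneg_left hone (by positivity : (0 : ℝ) ≤ |c| + 1)]

theorem norm_le_norm_pencil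
    (hbelow : ∀ u : h.domain, c * ‖(u : E)‖ ^ 2 ≤ (⟪h u, (u : E)⟫_ℂ).re)
    (hz : |z.re| + (2 * ‖k‖ + |c| + 1) < |z.im|) (u : h.domain) :
    ‖(u : E)‖ ≤ ‖pencil h k z u‖ := by
  refine norm_le_of_sq_le_re_inner (𝕜 := ℂ) ?_
  calc ‖(u : E)‖ ^ 2 ≤ (c - 2 * ‖z‖ * ‖k‖ + (z.im ^ 2 - z.re ^ 2)) * ‖(u : E)‖ ^ 2 :=
        le_mul_of_one_le_left (by positivity) (one_le_of_abs_re_add_lt_abs_im (norm_nonneg k) hz)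
    _ ≤ _ := mul_norm_sq_le_re_inner_pencil hbelow u

theorem antilipschitzWith_pencil
    (hbelow : ∀ u : h.domain, c * ‖(u : E)‖ ^ 2 ≤ (⟪h u, (u : E)⟫_ℂ).re)
    (hz : |z.re| + (2 * ‖k‖ + |c| + 1) < |z.im|) :
    AntilipschitzWith 1 (pencil h k z) :=
  AddMonoidHomClass.antilipschitz_of_bound _ fun u => by
    simpa using norm_le_norm_pencil hbelow hz u

variable [CompleteSpace E]

theorem exists_pencil_adjoint_eq_zero_of_mem_orthogonal_range (hsa : IsSelfAdjoint h) {w : E}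
    (hw : w ∈ (LinearMap.range (pencil h k z))ᗮ) :
    ∃ u : h.domain, (u : E) = w ∧ pencil h (ContinuousLinearMap.adjoint k) (conj z) u = 0 := by
  set w' := -(2 * conj z) • ContinuousLinearMap.adjoint k w + conj z ^ 2 • w
  have hinner : ∀ x : h.domain, ⟪w', (x : E)⟫_ℂ = ⟪w, h x⟫_ℂ := by
    intro x
    have h0 : ⟪w, pencil h k z x⟫_ℂ = 0 :=
      Submodule.inner_left_of_mem_orthogonal (LinearMap.mem_range_self _ x) hw
    rw [pencil_apply, inner_sub_right, inner_add_right, inner_smul_right, inner_smul_right,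
      ← ContinuousLinearMap.adjoint_inner_left] at h0
    simp only [w', inner_add_left, inner_smul_left, map_neg, map_mul, map_pow, conj_conj,
      map_ofNat]
    linear_combination -h0
  obtain ⟨u, rfl, hu⟩ := h.mem_graph_iff.mp (hsa.mem_graph_of_inner_eq hinner)
  refine ⟨u, rfl, ?_⟩
  rw [pencil_apply, hu]
  module

end Pencil

theorem pencil_bijective_of_im_large_general
    (h : H →ₗ.[ℂ] H) (hsa : IsSelfAdjoint h)
    (k : H →L[ℂ] H)
    (c : ℝ) (hbelow : ∀ u : h.domain, c * ‖(u : H)‖ ^ 2 ≤ (inner ℂ (h u) (u : H) : ℂ).re) :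
    ∃ c₀ : ℝ, 0 < c₀ ∧ ∀ z : ℂ, |z.re| + c₀ < |z.im| → PencilBijBdd h k z := by
  refine ⟨2 * ‖k‖ + |c| + 1, by positivity, fun z hz => ?_⟩
  have hA := antilipschitzWith_pencil hbelow hz
  have hclosed : IsClosed (LinearMap.range (pencil h k z) : Set H) := by
    rw [pencil_eq_add_comp] at hA ⊢
    exact hsa.isClosed.isClosed_range_add_of_antilipschitz _ hA
  have horth : (LinearMap.range (pencil h k z))ᗮ = ⊥ := by
    have hz' :
        |(conj z).re| + (2 * ‖ContinuousLinearMap.adjoint k‖ + |c| + 1) < |(conj z).im| := by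
      simpa using hz
    refine (Submodule.eq_bot_iff _).2 fun w hw => ?_
    obtain ⟨u, rfl, hu⟩ := exists_pencil_adjoint_eq_zero_of_mem_orthogonal_range hsa hw
    simpa using (antilipschitzWith_pencil hbelow hz').injective (hu.trans (map_zero _).symm)
  have hsurj := LinearMap.range_eq_top.mp <|
    Submodule.eq_top_of_isClosed_of_orthogonal_eq_bot hclosed horth
  exact ⟨⟨hA.injective, hsurj⟩, 1, fun u => by simpa using norm_le_norm_pencil hbelow hz u⟩

/-- If `h` is bounded from below, then there is `c₀ > 0` such that every
`z` with `|Im z| > |Re z| + c₀` belongs to `ρ(h,k)`. -/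
theorem pencil_bijective_of_im_large
    (h : H →ₗ.[ℂ] H) (hsa : IsSelfAdjoint h)
    (k : H →L[ℂ] H) (hk : IsSelfAdjoint k)
    (c : ℝ) (hbelow : ∀ u : h.domain, c * ‖(u : H)‖ ^ 2 ≤ (inner ℂ (h u) (u : H) : ℂ).re) :
    ∃ c₀ : ℝ, 0 < c₀ ∧ ∀ z : ℂ, |z.re| + c₀ < |z.im| → PencilBijBdd h k z :=
  pencil_bijective_of_im_large_general h hsa k c hbelow
end
end

section
/- Assume that h + c ≥ 0 in the quadratic form sense for some real constant c ≥ 0, i.e. (h u | u) ≥ −c‖u‖² for all u ∈ D(h), and let b > 1. Then for every z ∈ ℂ with Im z ≠ 0 such that p(z): D(h) → H is bijective with bounded inverse and |z|² ≥ b c / (b − 1), one has the resolvent bound ‖p(z)^{-1} u‖ ≤ (b / (|z| · |Im z|)) ‖u‖ for all u ∈ H. -/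
/-!
Pairing `p(z) v = u` with `v` gives `(u | v) = (h v | v) + 2 z̄ (k v | v) - z̄² ‖v‖²`, where the
first two inner products are real by symmetry; so `Im (z (u | v)) = Im z · ((h v | v) + |z|² ‖v‖²)`,
the `k`-term dropping out. The lower bound on `h` and `|z|² ≥ bc/(b-1)` make
`(h v | v) + |z|² ‖v‖² ≥ |z|² ‖v‖² / b`, and Cauchy–Schwarz bounds `|Im (z (u | v))|` by
`|z| ‖u‖ ‖v‖`.
-/

open Complex

noncomputable section

variable {H : Type*} [NormedAddCommGroup H] [InnerProductSpace ℂ H] [CompleteSpace H]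

namespace LinearPMap

variable {𝕜 E : Type*} [RCLike 𝕜] [NormedAddCommGroup E] [InnerProductSpace 𝕜 E]

theorem IsFormalAdjoint.coe_re_inner_apply_self {T : E →ₗ.[𝕜] E} (hT : T.IsFormalAdjoint T)
    (x : T.domain) : (RCLike.re (inner 𝕜 (T x) (x : E)) : 𝕜) = inner 𝕜 (T x) (x : E) := by
  rw [← RCLike.conj_eq_iff_re, inner_conj_symm]
  exact (hT x x).symm

theorem _root_.IsSelfAdjoint.isFormalAdjoint [CompleteSpace E] {A : E →ₗ.[𝕜] E}
    (hA : IsSelfAdjoint A) : A.IsFormalAdjoint A := by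
  simpa only [isSelfAdjoint_def.mp hA] using adjoint_isFormalAdjoint hA.dense_domain

end LinearPMap

section Pencil

open ComplexConjugate

variable {E : Type*} [NormedAddCommGroup E] [InnerProductSpace ℂ E]

theorem inner_pencil_apply_self (h : E →ₗ.[ℂ] E) (k : E →L[ℂ] E) (z : ℂ) (v : h.domain) :
    inner ℂ (pencil h k z v) (v : E) =
      inner ℂ (h v) (v : E) + conj (2 * z) * inner ℂ (k v) (v : E)
        - conj (z ^ 2) * (‖(v : E)‖ : ℂ) ^ 2 := by
  simp only [pencil, LinearMap.sub_apply, LinearMap.add_apply, LinearMap.smul_apply,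
    LinearMap.comp_apply, Submodule.subtype_apply, ContinuousLinearMap.coe_coe]
  rw [inner_sub_left, inner_add_left, inner_smul_left, inner_smul_left,
    inner_self_eq_norm_sq_to_K]
  rfl

theorem im_mul_inner_pencil_apply_self {h : E →ₗ.[ℂ] E} (hh : h.IsFormalAdjoint h)
    {k : E →L[ℂ] E} (hk : (k : E →ₗ[ℂ] E).IsSymmetric) (z : ℂ) (v : h.domain) :
    (z * inner ℂ (pencil h k z v) (v : E)).im
      = z.im * ((inner ℂ (h v) (v : E)).re + ‖z‖ ^ 2 * ‖(v : E)‖ ^ 2) := by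
  have hk' : ((inner ℂ (k v) (v : E)).re : ℂ) = inner ℂ (k v) (v : E) :=
    hk.coe_re_inner_apply_self (v : E)
  rw [inner_pencil_apply_self, ← hh.coe_re_inner_apply_self, ← hk', Complex.sq_norm,
    normSq_apply]
  simp [mul_im, mul_re, pow_two]
  ring

theorem abs_im_mul_le_norm_pencil_apply_mul {h : E →ₗ.[ℂ] E} (hh : h.IsFormalAdjoint h)
    {k : E →L[ℂ] E} (hk : (k : E →ₗ[ℂ] E).IsSymmetric) (z : ℂ) (v : h.domain) :
    |z.im| * |(inner ℂ (h v) (v : E)).re + ‖z‖ ^ 2 * ‖(v : E)‖ ^ 2|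
      ≤ ‖z‖ * (‖pencil h k z v‖ * ‖(v : E)‖) := by
  rw [← abs_mul, ← im_mul_inner_pencil_apply_self hh hk]
  calc |(z * inner ℂ (pencil h k z v) (v : E)).im|
      ≤ ‖z * inner ℂ (pencil h k z v) (v : E)‖ := abs_im_le_norm _
    _ ≤ ‖z‖ * (‖pencil h k z v‖ * ‖(v : E)‖) := by
      rw [norm_mul]
      exact mul_le_mul_of_nonneg_left (norm_inner_le_norm _ _) (norm_nonneg z)

end Pencil

theorem div_mul_sq_le_add_mul_sq {a b c r x : ℝ} (hb : 1 < b) (ha : -c * x ^ 2 ≤ a)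
    (hr : b * c / (b - 1) ≤ r) : r / b * x ^ 2 ≤ a + r * x ^ 2 := by
  rw [div_le_iff₀ (by linarith)] at hr
  rw [div_mul_eq_mul_div, div_le_iff₀ (by linarith)]
  nlinarith [sq_nonneg x]

theorem pencil_inverse_estimate_general
    (h : H →ₗ.[ℂ] H) (hsa : IsSelfAdjoint h)
    (k : H →L[ℂ] H) (hk : IsSelfAdjoint k)
    (c : ℝ)
    (hbelow : ∀ u : h.domain, -c * ‖(u : H)‖ ^ 2 ≤ (inner ℂ (h u) (u : H) : ℂ).re)
    (b : ℝ) (hb : 1 < b)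
    (z : ℂ) (hz : z.im ≠ 0)
    (hzlarge : b * c / (b - 1) ≤ ‖z‖ ^ 2) :
    ∀ (u : H) (v : h.domain), pencil h k z v = u →
      ‖(v : H)‖ ≤ b / (‖z‖ * |z.im|) * ‖u‖ := by
  rintro _ v rfl
  have hz0 : 0 < ‖z‖ := norm_pos_iff.2 fun h0 => hz (by simp [h0])
  have him : 0 < |z.im| := abs_pos.2 hz
  have hb0 : 0 < b := one_pos.trans hb
  have hcoer := div_mul_sq_le_add_mul_sq hb (hbelow v) hzlarge
  have hest := abs_im_mul_le_norm_pencil_apply_mul hsa.isFormalAdjoint hk.isSymmetric z v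
  rw [abs_of_nonneg ((by positivity : (0 : ℝ) ≤ _).trans hcoer)] at hest
  rw [div_mul_eq_mul_div, le_div_iff₀ (by positivity)]
  rcases (norm_nonneg (v : H)).eq_or_lt with hv | hv
  · rw [← hv, zero_mul]
    positivity
  · refine le_of_mul_le_mul_right ?_ (by positivity : 0 < ‖(v : H)‖ * ‖z‖ / b)
    calc ‖(v : H)‖ * (‖z‖ * |z.im|) * (‖(v : H)‖ * ‖z‖ / b)
        = |z.im| * (‖z‖ ^ 2 / b * ‖(v : H)‖ ^ 2) := by ring
      _ ≤ ‖z‖ * (‖pencil h k z v‖ * ‖(v : H)‖) :=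
        (mul_le_mul_of_nonneg_left hcoer him.le).trans hest
      _ = b * ‖pencil h k z v‖ * (‖(v : H)‖ * ‖z‖ / b) := by field_simp

/-- If `h + c ≥ 0` in the form sense with `c ≥ 0` and `b > 1`, then for
`Im z ≠ 0` with `p(z)` boundedly invertible and `|z|² ≥ bc/(b-1)` one has
`‖p(z)⁻¹ u‖ ≤ (b / (|z|·|Im z|)) ‖u‖`. -/
theorem pencil_inverse_estimate
    (h : H →ₗ.[ℂ] H) (hsa : IsSelfAdjoint h)
    (k : H →L[ℂ] H) (hk : IsSelfAdjoint k)
    (c : ℝ) (hc : 0 ≤ c)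
    (hbelow : ∀ u : h.domain, -c * ‖(u : H)‖ ^ 2 ≤ (inner ℂ (h u) (u : H) : ℂ).re)
    (b : ℝ) (hb : 1 < b)
    (z : ℂ) (hz : z.im ≠ 0) (hbij : PencilBijBdd h k z)
    (hzlarge : b * c / (b - 1) ≤ ‖z‖ ^ 2) :
    ∀ (u : H) (v : h.domain), pencil h k z v = u →
      ‖(v : H)‖ ≤ b / (‖z‖ * |z.im|) * ‖u‖ :=
  pencil_inverse_estimate_general h hsa k hk c hbelow b hb z hz hzlarge
end
end

section
/- Assume (h0 u | u) ≥ 0 for all u ∈ D(h) (hyperbolicity assumption (A1)), and let ε > 0. Then there exists a constant C > 0 such that for every z ∈ ℂ with Im z ≠ 0, |z| ≥ (1 + ε)‖k‖ (operator norm of k) and such that p(z): D(h) → H is bijective with bounded inverse, one has for all u ∈ H, with v := p(z)^{-1} u: (i) ‖v‖ ≤ C ‖u‖ / (|z| · |Im z|), and (ii) (h0 v | v) ≤ C² ‖u‖² / (Im z)². -/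
open Complex

noncomputable section

variable {H : Type*} [NormedAddCommGroup H] [InnerProductSpace ℂ H] [CompleteSpace H]

/-- The quadratic form `(h₀ u | u)` of `h₀ = h + k²` on the domain of `h`. -/
def h0Form (h : H →ₗ.[ℂ] H) (k : H →L[ℂ] H) (u : h.domain) : ℝ :=
  (inner ℂ (h u + k (k (u : H))) (u : H) : ℂ).re

/-! For `v ∈ D(h)` put `a = (v | h v)`, `b = (v | k v)` (both real) and `W = (v | p(z) v) =
a + 2zb - z²‖v‖²`. Then `Im (z̄ W) = -Im z · (a + |z|²‖v‖²)`, so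
`|Im z| (a + |z|²‖v‖²) ≤ |z| ‖v‖ ‖p(z) v‖`. Hyperbolicity gives `a ≥ -‖k v‖² ≥ -|z|²‖v‖²/(1+ε)²`,
so `a + |z|²‖v‖² ≥ c |z|²‖v‖²` with `c = 1 - (1+ε)⁻²`; this yields (i) with `C = 1/c`, and (ii)
because `(h₀ v | v) = a + ‖k v‖² ≤ a + |z|²‖v‖²`. -/

open scoped ComplexConjugate

theorem IsSelfAdjoint.isFormalAdjoint_self {𝕜 E : Type*} [RCLike 𝕜] [NormedAddCommGroup E]
    [InnerProductSpace 𝕜 E] [CompleteSpace E] {A : E →ₗ.[𝕜] E} (hA : IsSelfAdjoint A) :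
    A.IsFormalAdjoint A := by
  have h := LinearPMap.adjoint_isFormalAdjoint hA.dense_domain
  rwa [LinearPMap.isSelfAdjoint_def.mp hA] at h

theorem LinearPMap.IsFormalAdjoint.coe_re_inner_self_apply {𝕜 E : Type*} [RCLike 𝕜]
    [NormedAddCommGroup E] [InnerProductSpace 𝕜 E] {A : E →ₗ.[𝕜] E} (hA : A.IsFormalAdjoint A)
    (x : A.domain) : (RCLike.re (inner 𝕜 (x : E) (A x)) : 𝕜) = inner 𝕜 (x : E) (A x) :=
  RCLike.conj_eq_iff_re.mp <| by rw [inner_conj_symm, hA]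

namespace Complex

theorem im_conj_mul_quadratic (z : ℂ) (a b n : ℝ) :
    (conj z * (a + 2 * z * b - z ^ 2 * n)).im = -(z.im * (a + ‖z‖ ^ 2 * n)) := by
  rw [Complex.sq_norm, normSq_apply]
  simp only [mul_im, mul_re, sub_im, sub_re, add_im, add_re, conj_re, conj_im, ofReal_re,
    ofReal_im, re_ofNat, im_ofNat, sq]
  ring

theorem abs_im_mul_le_norm_mul_norm_quadratic (z : ℂ) (a b n : ℝ) :
    |z.im| * (a + ‖z‖ ^ 2 * n) ≤ ‖z‖ * ‖(a + 2 * z * b - z ^ 2 * n : ℂ)‖ :=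
  calc |z.im| * (a + ‖z‖ ^ 2 * n) ≤ |z.im * (a + ‖z‖ ^ 2 * n)| := by
        rw [abs_mul]; gcongr; exact le_abs_self _
    _ = |(conj z * (a + 2 * z * b - z ^ 2 * n)).im| := by rw [im_conj_mul_quadratic, abs_neg]
    _ ≤ ‖z‖ * ‖(a + 2 * z * b - z ^ 2 * n : ℂ)‖ := by
        rw [← norm_conj z, ← norm_mul]; exact abs_im_le_norm _

end Complex

section Pencil

variable {E : Type*} [NormedAddCommGroup E] [InnerProductSpace ℂ E]
  {h : E →ₗ.[ℂ] E} {k : E →L[ℂ] E}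

local notation "⟪" x ", " y "⟫" => inner ℂ x y

theorem inner_pencil_self (hh : h.IsFormalAdjoint h) (hk : (k : E →ₗ[ℂ] E).IsSymmetric) (z : ℂ)
    (v : h.domain) :
    ⟪(v : E), pencil h k z v⟫ =
      (⟪(v : E), h v⟫.re : ℂ) + 2 * z * (⟪(v : E), k v⟫.re : ℂ) - z ^ 2 * (‖(v : E)‖ ^ 2 : ℝ) := by
  have hhv : ((⟪(v : E), h v⟫.re : ℝ) : ℂ) = ⟪(v : E), h v⟫ := hh.coe_re_inner_self_apply v
  have hkv : ((⟪(v : E), k v⟫.re : ℝ) : ℂ) = ⟪(v : E), k v⟫ := hk.coe_re_inner_self_apply (v : E)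
  have hvv : ((‖(v : E)‖ ^ 2 : ℝ) : ℂ) = ⟪(v : E), (v : E)⟫ := by
    rw [inner_self_eq_norm_sq_to_K]; norm_cast
  rw [hhv, hkv, hvv]
  simp only [pencil, LinearMap.sub_apply, LinearMap.add_apply, LinearMap.smul_apply,
    LinearMap.comp_apply, Submodule.subtype_apply, inner_sub_right, inner_add_right,
    inner_smul_right]
  rfl

theorem abs_im_mul_re_inner_add_le (hh : h.IsFormalAdjoint h)
    (hk : (k : E →ₗ[ℂ] E).IsSymmetric) (z : ℂ) (v : h.domain) :
    |z.im| * (⟪(v : E), h v⟫.re + ‖z‖ ^ 2 * ‖(v : E)‖ ^ 2) ≤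
      ‖z‖ * (‖(v : E)‖ * ‖pencil h k z v‖) :=
  calc _ ≤ ‖z‖ * ‖⟪(v : E), pencil h k z v⟫‖ := by
        rw [inner_pencil_self hh hk]; exact abs_im_mul_le_norm_mul_norm_quadratic _ _ _ _
    _ ≤ _ := by gcongr; exact norm_inner_le_norm _ _

theorem h0Form_eq (hk : (k : E →ₗ[ℂ] E).IsSymmetric) (v : h.domain) :
    h0Form h k v = ⟪(v : E), h v⟫.re + ‖k v‖ ^ 2 := by
  have hkk : ⟪k (k (v : E)), (v : E)⟫ = ⟪k (v : E), k (v : E)⟫ := hk _ _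
  rw [h0Form, inner_add_left, add_re, hkk]
  congr 1
  · exact inner_re_symm (𝕜 := ℂ) _ _
  · exact inner_self_eq_norm_sq (𝕜 := ℂ) _

end Pencil

theorem ContinuousLinearMap.norm_apply_sq_le_of_mul_opNorm_le {𝕜 E F : Type*}
    [NontriviallyNormedField 𝕜] [SeminormedAddCommGroup E] [SeminormedAddCommGroup F]
    [NormedSpace 𝕜 E] [NormedSpace 𝕜 F] (k : E →L[𝕜] F) {t s : ℝ} (ht : 0 < t) (hks : t * ‖k‖ ≤ s) (x : E) :
    ‖k x‖ ^ 2 ≤ (t ^ 2)⁻¹ * (s ^ 2 * ‖x‖ ^ 2) := by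
  have hk : ‖k‖ ≤ s / t := by rwa [le_div_iff₀ ht, mul_comm]
  calc ‖k x‖ ^ 2 ≤ (s / t * ‖x‖) ^ 2 := by
        gcongr; exact k.le_of_opNorm_le hk x
    _ = (t ^ 2)⁻¹ * (s ^ 2 * ‖x‖ ^ 2) := by field_simp

/-- Read with `x = ‖v‖`, `U = ‖p(z) v‖`, `X = (v | h v) + |z|² ‖v‖²`, `s = |z|`, `r = |Im z|`. -/
theorem bounds_of_coercive {c s r x U X : ℝ} (hc : 0 < c) (hs : 0 < s) (hr : 0 < r) (hx : 0 ≤ x)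
    (hU : 0 ≤ U) (hcoer : c * (s ^ 2 * x ^ 2) ≤ X) (hbound : r * X ≤ s * (x * U)) :
    x ≤ c⁻¹ * U / (s * r) ∧ X ≤ c⁻¹ * U ^ 2 / r ^ 2 := by
  have hx' : x ≤ c⁻¹ * U / (s * r) := by
    rcases hx.eq_or_lt with rfl | hx
    · positivity
    · rw [le_div_iff₀ (by positivity), ← div_eq_inv_mul, le_div_iff₀ hc]
      nlinarith [mul_pos hs hx]
  refine ⟨hx', ?_⟩
  calc X ≤ s * (x * U) / r := by rwa [le_div_iff₀ hr, mul_comm]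
    _ ≤ s * (c⁻¹ * U / (s * r) * U) / r := by gcongr
    _ = c⁻¹ * U ^ 2 / r ^ 2 := by field_simp

/-- Under (A1), for `|z| ≥ (1+ε)‖k‖` and `Im z ≠ 0` the inverse of the pencil
satisfies `‖p(z)⁻¹u‖ ≤ C‖u‖/(|z||Im z|)` and `(h₀ p(z)⁻¹u | p(z)⁻¹u) ≤ C²‖u‖²/(Im z)²`. -/
theorem pencil_basic_estimates
    (h : H →ₗ.[ℂ] H) (hsa : IsSelfAdjoint h)
    (k : H →L[ℂ] H) (hk : IsSelfAdjoint k)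
    (hpos : ∀ u : h.domain, 0 ≤ h0Form h k u)
    (ε : ℝ) (hε : 0 < ε) :
    ∃ C : ℝ, 0 < C ∧ ∀ z : ℂ, z.im ≠ 0 → (1 + ε) * ‖k‖ ≤ ‖z‖ → PencilBijBdd h k z →
      ∀ (u : H) (v : h.domain), pencil h k z v = u →
        ‖(v : H)‖ ≤ C * ‖u‖ / (‖z‖ * |z.im|) ∧
        h0Form h k v ≤ C ^ 2 * ‖u‖ ^ 2 / z.im ^ 2 := by
  have hδ : 0 < ((1 + ε) ^ 2)⁻¹ := by positivity
  have hδ1 : ((1 + ε) ^ 2)⁻¹ < 1 := inv_lt_one_of_one_lt₀ (by nlinarith)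
  set c : ℝ := 1 - ((1 + ε) ^ 2)⁻¹
  have hc : 0 < c := sub_pos.mpr hδ1
  have hC : 1 ≤ c⁻¹ := (one_le_inv₀ hc).mpr (by linarith)
  refine ⟨c⁻¹, by positivity, fun z hz hzk _ u v hvu => ?_⟩
  subst hvu
  have hr : 0 < |z.im| := abs_pos.mpr hz
  have hs : 0 < ‖z‖ := hr.trans_le (abs_im_le_norm z)
  have hkv := k.norm_apply_sq_le_of_mul_opNorm_le (by linarith) hzk (v : H)
  have hform := h0Form_eq hk.isSymmetric v
  have hbound := abs_im_mul_re_inner_add_le hsa.isFormalAdjoint_self hk.isSymmetric z v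
  obtain ⟨hi, hX⟩ := bounds_of_coercive hc hs hr (norm_nonneg _) (norm_nonneg _)
    (by nlinarith [hpos v]) hbound
  refine ⟨hi, ?_⟩
  calc h0Form h k v ≤ c⁻¹ * ‖pencil h k z v‖ ^ 2 / |z.im| ^ 2 := by nlinarith
    _ ≤ c⁻¹ ^ 2 * ‖pencil h k z v‖ ^ 2 / z.im ^ 2 := by
        rw [sq_abs]; gcongr; exact le_self_pow₀ hC two_ne_zero
end
end

section
/- Assume (h0 u | u) ≥ 0 for all u ∈ D(h), and let ℓ ∈ ℝ. Then the following are equivalent: (i) there exists C > 0 such that for all u0 ∈ D(h) and u1 ∈ H, | ‖u1 − ℓ u0‖² + (h0 u0 | u0) − ‖(k − ℓ) u0‖² | ≤ C ( ‖u1 − k u0‖² + (h0 u0 | u0) ); (ii) there exists C' > 0 such that ‖(k − ℓ) u0‖² ≤ C' (h0 u0 | u0) for all u0 ∈ D(h). That is, the conserved form ⟨·|·⟩_ℓ is continuous with respect to the homogeneous energy norm if and only if h0 ≳ (k − ℓ)². -/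
/-!
Writing `w = u₁ - k u₀`, `v = (k - ℓ) u₀` and `Q = (h₀ u₀ | u₀)`, the energy form is
`‖w + v‖² + Q - ‖v‖²` and the homogeneous energy is `‖w‖² + Q`, so the theorem is a statement
about a vector `v` and a real `Q` in a normed space. If `‖v‖² ≤ C' Q`, the triangle inequality
gives `‖w + v‖² - ‖v‖² ≤ 2‖w‖² + ‖v‖²`, which bounds the energy form. Conversely, testing the
bound with `w = C⁻¹ v` leaves `(C + 1) ‖v‖² ≤ C² (C - 1) Q`, hence `‖v‖² ≤ C² Q`
because the bound at `w = 0` forces `Q ≥ 0`.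
-/

open Complex

noncomputable section

variable {H : Type*} [NormedAddCommGroup H] [InnerProductSpace ℂ H] [CompleteSpace H]

section EnergyBounds

variable {E : Type*} [NormedAddCommGroup E]

theorem abs_norm_add_sq_add_sub_norm_sq_le {C Q : ℝ} {v : E} (hC : 0 < C)
    (hv : ‖v‖ ^ 2 ≤ C * Q) (w : E) :
    |‖w + v‖ ^ 2 + Q - ‖v‖ ^ 2| ≤ (C + 2) * (‖w‖ ^ 2 + Q) := by
  have hQ : 0 ≤ Q := nonneg_of_mul_nonneg_right ((sq_nonneg _).trans hv) hC
  have hsum : ‖w + v‖ ^ 2 ≤ 2 * ‖w‖ ^ 2 + 2 * ‖v‖ ^ 2 := by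
    nlinarith [norm_add_le w v, norm_nonneg (w + v), sq_nonneg (‖w‖ - ‖v‖)]
  rw [abs_le]
  constructor <;> nlinarith [sq_nonneg ‖w + v‖, sq_nonneg ‖w‖]

theorem norm_sq_le_of_forall_abs_norm_add_sq_add_sub_norm_sq_le [NormedSpace ℝ E]
    {C Q : ℝ} {v : E} (hC : 0 < C)
    (h : ∀ w : E, |‖w + v‖ ^ 2 + Q - ‖v‖ ^ 2| ≤ C * (‖w‖ ^ 2 + Q)) :
    ‖v‖ ^ 2 ≤ C ^ 2 * Q := by
  have hQ : 0 ≤ Q := by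
    have h0 := h 0
    simp only [zero_add, add_sub_cancel_left, norm_zero] at h0
    nlinarith [neg_abs_le Q]
  have htest := (le_abs_self _).trans (h (C⁻¹ • v))
  rw [show C⁻¹ • v + v = (C⁻¹ + 1) • v by rw [add_smul, one_smul], norm_smul, norm_smul,
    Real.norm_of_nonneg (by positivity), Real.norm_of_nonneg (by positivity)] at htest
  have hcleared : (C + 1) * ‖v‖ ^ 2 ≤ C ^ 2 * (C - 1) * Q := by
    have hscaled := mul_le_mul_of_nonneg_left htest (sq_nonneg C)
    field_simp at hscaled
    nlinarith [hscaled]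
  have key : (C + 1) * ‖v‖ ^ 2 ≤ (C + 1) * (C ^ 2 * Q) := by
    nlinarith [mul_nonneg hQ (sq_nonneg C)]
  exact le_of_mul_le_mul_left key (by linarith)

end EnergyBounds

theorem energy_form_continuous_homogeneous_iff_general
    (h : H →ₗ.[ℂ] H)
    (k : H →L[ℂ] H)
    (ℓ : ℝ) :
    (∃ C : ℝ, 0 < C ∧ ∀ (u0 : h.domain) (u1 : H),
        |‖u1 - (ℓ : ℂ) • (u0 : H)‖ ^ 2 + h0Form h k u0
            - ‖k (u0 : H) - (ℓ : ℂ) • (u0 : H)‖ ^ 2|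
          ≤ C * (‖u1 - k (u0 : H)‖ ^ 2 + h0Form h k u0)) ↔
    (∃ C' : ℝ, 0 < C' ∧ ∀ u0 : h.domain,
        ‖k (u0 : H) - (ℓ : ℂ) • (u0 : H)‖ ^ 2 ≤ C' * h0Form h k u0) := by
  constructor
  · rintro ⟨C, hC, hbound⟩
    refine ⟨C ^ 2, by positivity, fun u0 => ?_⟩
    refine norm_sq_le_of_forall_abs_norm_add_sq_add_sub_norm_sq_le hC fun w => ?_
    simpa only [add_sub_assoc, sub_self, add_zero] using hbound u0 (w + k u0)
  · rintro ⟨C', hC', hbound⟩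
    refine ⟨C' + 2, by linarith, fun u0 u1 => ?_⟩
    simpa only [sub_add_sub_cancel] using
      abs_norm_add_sq_add_sub_norm_sq_le hC' (hbound u0) (u1 - k u0)

/-- The conserved form `⟨·|·⟩_ℓ` is continuous for the homogeneous energy
norm iff `h₀ ≳ (k-ℓ)²`. -/
theorem energy_form_continuous_homogeneous_iff
    (h : H →ₗ.[ℂ] H) (hsa : IsSelfAdjoint h)
    (k : H →L[ℂ] H) (hk : IsSelfAdjoint k)
    (hpos : ∀ u : h.domain, 0 ≤ h0Form h k u)
    (ℓ : ℝ) :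
    (∃ C : ℝ, 0 < C ∧ ∀ (u0 : h.domain) (u1 : H),
        |‖u1 - (ℓ : ℂ) • (u0 : H)‖ ^ 2 + h0Form h k u0
            - ‖k (u0 : H) - (ℓ : ℂ) • (u0 : H)‖ ^ 2|
          ≤ C * (‖u1 - k (u0 : H)‖ ^ 2 + h0Form h k u0)) ↔
    (∃ C' : ℝ, 0 < C' ∧ ∀ u0 : h.domain,
        ‖k (u0 : H) - (ℓ : ℂ) • (u0 : H)‖ ^ 2 ≤ C' * h0Form h k u0) :=
  energy_form_continuous_homogeneous_iff_general h k ℓ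
end
end

section
/- Let u : ℝ → H be twice continuously differentiable with u(t) ∈ D(h) for all t, solving the abstract Klein–Gordon equation u''(t) = 2 i k u'(t) − h u(t). Then the homogeneous energy E(t) := ‖u'(t) − i k u(t)‖² + (h0 u(t) | u(t)) (where h0 = h + k²) is differentiable in t with derivative E'(t) = 2 Im( ( k u(t) | h u(t) ) ). In particular, if k commutes with h (in the sense that Im(k v | h v) = 0 for all v ∈ D(h)), the homogeneous energy is conserved. -/
/-! Along a solution, `v = u' - i k u` satisfies `v' = i k u' - h u`, so the derivative of the
energy is `2 Re (v | v') + 2 Re (h₀ u | u')`, which collapses to `2 Im (k u | h u)` by symmetry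
of `k`. The only analytic point is that `s ↦ (h u(s) | u(s))` must be differentiated although
`h u` is merely continuous (`h u = 2 i k u' - u''`): symmetry of `h` turns its difference quotient
into `(h u(s) | (u(s) - u(t))/(s - t)) + ((u(s) - u(t))/(s - t) | h u(t))`. -/

open scoped InnerProductSpace

section InnerDeriv

variable {𝕜 E : Type*} [RCLike 𝕜] [NormedAddCommGroup E] [InnerProductSpace 𝕜 E]
  [NormedSpace ℝ E] [IsScalarTower ℝ 𝕜 E]

theorem HasDerivAt.inner_of_eq_zero_of_continuousAt {w d : ℝ → E} {d' : E} {t : ℝ}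
    (hd : HasDerivAt d d' t) (hd0 : d t = 0) (hw : ContinuousAt w t) :
    HasDerivAt (fun s => ⟪w s, d s⟫_𝕜) ⟪w t, d'⟫_𝕜 t := by
  rw [hasDerivAt_iff_tendsto_slope] at hd ⊢
  refine ((hw.mono_left nhdsWithin_le_nhds).inner hd).congr fun s => ?_
  simp only [slope_def_module, hd0, inner_zero_right, sub_zero,
    RCLike.real_smul_eq_coe_smul (K := 𝕜), inner_smul_right, smul_eq_mul]

theorem HasDerivAt.inner_of_continuousAt_of_symm {w u : ℝ → E} {u' : E} {t : ℝ}
    (hu : HasDerivAt u u' t) (hw : ContinuousAt w t)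
    (hsymm : ∀ s, ⟪w s, u t⟫_𝕜 = ⟪u s, w t⟫_𝕜) :
    HasDerivAt (fun s => ⟪w s, u s⟫_𝕜) (⟪w t, u'⟫_𝕜 + ⟪u', w t⟫_𝕜) t := by
  have hd : HasDerivAt (fun s => u s - u t) u' t := hu.sub_const _
  have hsplit : (fun s => ⟪w s, u s⟫_𝕜) =
      fun s => ⟪w s, u s - u t⟫_𝕜 + ⟪u s - u t, w t⟫_𝕜 + ⟪u t, w t⟫_𝕜 := by
    funext s
    rw [inner_sub_right, inner_sub_left, hsymm s]
    ring
  rw [hsplit]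
  exact ((hd.inner_of_eq_zero_of_continuousAt (sub_self _) hw).add
    (hd.inner 𝕜 (hasDerivAt_const t (w t)))).add_const _ |>.congr_deriv (by simp)

end InnerDeriv

theorem HasDerivAt.complex_re {f : ℝ → ℂ} {f' : ℂ} {t : ℝ} (hf : HasDerivAt f f' t) :
    HasDerivAt (fun s => (f s).re) f'.re t :=
  Complex.reCLM.hasFDerivAt.comp_hasDerivAt t hf

section KleinGordon

open Complex

variable {E : Type*} [NormedAddCommGroup E] [InnerProductSpace ℂ E]

theorem re_inner_add_re_inner_eq_im {k : E →L[ℂ] E} (hk : (k : E →ₗ[ℂ] E).IsSymmetric)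
    (p q w : E) :
    (⟪p - I • k q, I • k p - w⟫_ℂ).re + (⟪w + k (k q), p⟫_ℂ).re = (⟪k q, w⟫_ℂ).im := by
  have hkp : (⟪p, k p⟫_ℂ).im = 0 := by simpa using hk.im_inner_self_apply p
  have hwp : (⟪w, p⟫_ℂ).re = (⟪p, w⟫_ℂ).re := inner_re_symm (𝕜 := ℂ) w p
  have hkk : ⟪k (k q), p⟫_ℂ = ⟪k q, k p⟫_ℂ := hk _ _
  simp only [inner_sub_left, inner_sub_right, inner_smul_left, inner_smul_right, inner_add_left,
    hkk, conj_I, sub_re, add_re, mul_re, sub_im, mul_im, I_re, I_im, neg_re, neg_im, hkp, hwp]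
  ring

/-- `w s` stands for `h u(s)`. -/
theorem hasDerivAt_kleinGordon_energy {k : E →L[ℂ] E} (hk : (k : E →ₗ[ℂ] E).IsSymmetric)
    {u w : ℝ → E} (hu : ContDiff ℝ 2 u) (hsymm : ∀ s r, ⟪w s, u r⟫_ℂ = ⟪u s, w r⟫_ℂ)
    (hode : ∀ s, deriv (deriv u) s = (2 * I) • k (deriv u s) - w s) (t : ℝ) :
    HasDerivAt (fun s => ‖deriv u s - I • k (u s)‖ ^ 2 + (⟪w s + k (k (u s)), u s⟫_ℂ).re)
      (2 * (⟪k (u t), w t⟫_ℂ).im) t := by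
  have hu1 : ∀ s, HasDerivAt u (deriv u s) s := fun s =>
    ((hu.differentiable two_ne_zero) s).hasDerivAt
  have hu' : ContDiff ℝ 1 (deriv u) := hu.iterate_deriv' 1 1
  have hu2 : HasDerivAt (deriv u) (deriv (deriv u) t) t :=
    ((hu'.differentiable one_ne_zero) t).hasDerivAt
  have hku : HasDerivAt (fun s => k (u s)) (k (deriv u t)) t :=
    (k.restrictScalars ℝ).hasFDerivAt.comp_hasDerivAt t (hu1 t)
  have hw : Continuous w := by
    have hw_eq : w = fun s => (2 * I) • k (deriv u s) - deriv (deriv u) s := by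
      funext s; rw [hode s]; abel
    rw [hw_eq]
    exact ((k.continuous.comp hu'.continuous).const_smul _).sub (hu'.continuous_deriv le_rfl)
  have hv : HasDerivAt (fun s => deriv u s - I • k (u s)) (I • k (deriv u t) - w t) t :=
    (hu2.sub (hku.const_smul I)).congr_deriv (by rw [hode t]; module)
  have hQ := (hu1 t).inner_of_continuousAt_of_symm (𝕜 := ℂ) (w := fun s => w s + k (k (u s)))
    (hw.add (by fun_prop)).continuousAt fun s => by
      rw [inner_add_left, inner_add_right, hsymm s t, hk.apply_clm, hk.apply_clm]
  refine (((hv.inner ℂ hv).add hQ).complex_re.congr_deriv ?_).congr_of_eventuallyEq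
    (.of_forall fun s => ?_)
  · set v := deriv u t - I • k (u t)
    set W := w t + k (k (u t))
    have hv' : (⟪I • k (deriv u t) - w t, v⟫_ℂ).re = (⟪v, I • k (deriv u t) - w t⟫_ℂ).re :=
      inner_re_symm (𝕜 := ℂ) _ _
    have hW : (⟪deriv u t, W⟫_ℂ).re = (⟪W, deriv u t⟫_ℂ).re := inner_re_symm (𝕜 := ℂ) _ _
    simp only [add_re, hv', hW]
    linarith [re_inner_add_re_inner_eq_im hk (deriv u t) (u t) (w t)]
  · simp only [Pi.add_apply, add_re]
    rw [← inner_self_eq_norm_sq (𝕜 := ℂ)]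
    rfl

end KleinGordon

variable {H : Type*} [NormedAddCommGroup H] [InnerProductSpace ℂ H] [CompleteSpace H]

/-- For a solution of `u'' = 2ik u' - h u`, the homogeneous energy
`E(t) = ‖u'-iku‖² + (h₀u|u)` has derivative `E'(t) = 2 Im (ku|hu)`; in particular it is
conserved if `Im (kv|hv) = 0` for all `v ∈ D(h)`. -/
theorem homogeneous_energy_derivative
    (h : H →ₗ.[ℂ] H) (hsa : IsSelfAdjoint h)
    (k : H →L[ℂ] H) (hk : IsSelfAdjoint k)
    (u : ℝ → H) (hreg : ContDiff ℝ 2 u)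
    (hdom : ∀ t : ℝ, u t ∈ h.domain)
    (hode : ∀ t : ℝ,
      deriv (deriv u) t = (2 * Complex.I) • k (deriv u t) - h ⟨u t, hdom t⟩) :
    (∀ t : ℝ,
      HasDerivAt
        (fun s : ℝ => ‖deriv u s - Complex.I • k (u s)‖ ^ 2
          + (inner ℂ (h ⟨u s, hdom s⟩ + k (k (u s))) (u s) : ℂ).re)
        (2 * (inner ℂ (k (u t)) (h ⟨u t, hdom t⟩) : ℂ).im) t) ∧
    ((∀ v : h.domain, (inner ℂ (k (v : H)) (h v) : ℂ).im = 0) →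
      ∀ s t : ℝ,
        ‖deriv u s - Complex.I • k (u s)‖ ^ 2
            + (inner ℂ (h ⟨u s, hdom s⟩ + k (k (u s))) (u s) : ℂ).re
          = ‖deriv u t - Complex.I • k (u t)‖ ^ 2
            + (inner ℂ (h ⟨u t, hdom t⟩ + k (k (u t))) (u t) : ℂ).re) := by
  have hsym : h.IsFormalAdjoint h := by
    simpa only [LinearPMap.isSelfAdjoint_def.mp hsa] using
      LinearPMap.adjoint_isFormalAdjoint hsa.dense_domain
  have hE := hasDerivAt_kleinGordon_energy hk.isSymmetric hreg
    (w := fun s => h ⟨u s, hdom s⟩) (fun s r => hsym ⟨u s, hdom s⟩ ⟨u r, hdom r⟩) hode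
  refine ⟨hE, fun hcomm s t =>
    is_const_of_deriv_eq_zero (fun r => (hE r).differentiableAt) (fun r => ?_) s t⟩
  rw [(hE r).deriv, hcomm ⟨u r, hdom r⟩, mul_zero]
end

section
/- Let α : ℝ → ℝ be a continuous nonnegative function with m := inf_{|x| ≤ 1} α(x) > 0. Then there exists a constant C > 0, depending only on m, such that for every continuously differentiable compactly supported function u : ℝ → ℂ, ∫_ℝ (1 + x²)^{-1} |u(x)|² dx ≤ C ∫_ℝ ( |u'(x)|² + α(x)² |u(x)|² ) dx. (This is the one-dimensional Hardy-type inequality underlying the weighted estimate ‖⟨x⟩^{-1}u‖ ≲ ‖h₀^{1/2}u‖ in the geometric setting.) -/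
/-!
Multiplier method: for a bounded `C¹` function `g`, the integral over `ℝ` of
`(g |u|²)' = g' |u|² + 2 g ⟪u, u'⟫` vanishes. For `g x = -8x / (1 + 4x²)` one has
`g' ≥ ⟨x⟩⁻²` when `|x| ≥ 1` and `g' ≥ -8` everywhere; the deficit on `[-1, 1]` is paid for by
`α² ≥ m²`. Since `g² ≤ 8 ⟨x⟩⁻²`, Cauchy–Schwarz and AM–GM absorb the cross term into half of
`∫ ⟨x⟩⁻² |u|²` plus a multiple of `∫ |u'|²`.
-/

open MeasureTheory RealInnerProductSpace

theorem integral_deriv_eq_zero_of_hasCompactSupport {E : Type*} [NormedAddCommGroup E]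
    [NormedSpace ℝ E] {f : ℝ → E} (hf : ContDiff ℝ 1 f) (hfs : HasCompactSupport f) :
    ∫ x, deriv f x = 0 :=
  integral_eq_zero_of_hasDerivAt_of_integrable
    (fun x ↦ (hf.differentiable one_ne_zero x).hasDerivAt)
    ((hf.continuous_deriv le_rfl).integrable_of_hasCompactSupport hfs.deriv)
    (hf.continuous.integrable_of_hasCompactSupport hfs)

theorem neg_mul_two_inner_le {E : Type*} [NormedAddCommGroup E] [InnerProductSpace ℝ E]
    (a b : E) {g w B : ℝ} (hB : 0 < B) (hgw : g ^ 2 ≤ B * w) :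
    -(g * (2 * ⟪a, b⟫)) ≤ w * ‖a‖ ^ 2 / 2 + 2 * B * ‖b‖ ^ 2 := by
  have hCS : -(g * (2 * ⟪a, b⟫)) ≤ 2 * |g| * (‖a‖ * ‖b‖) := by
    calc -(g * (2 * ⟪a, b⟫)) ≤ |g * (2 * ⟪a, b⟫)| := neg_le_abs _
      _ = 2 * |g| * |⟪a, b⟫| := by rw [abs_mul, abs_mul, abs_two]; ring
      _ ≤ 2 * |g| * (‖a‖ * ‖b‖) := by gcongr; exact abs_real_inner_le_norm a b
  -- AM-GM with weights `1 / (2B)` and `2B`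
  have hAMGM : 2 * |g| * (‖a‖ * ‖b‖) ≤ g ^ 2 * ‖a‖ ^ 2 / (2 * B) + 2 * B * ‖b‖ ^ 2 := by
    rw [← sq_abs g]
    have := sq_nonneg (|g| * ‖a‖ - 2 * B * ‖b‖)
    field_simp
    nlinarith
  have habsorb : g ^ 2 * ‖a‖ ^ 2 / (2 * B) ≤ w * ‖a‖ ^ 2 / 2 := by
    rw [div_le_div_iff₀ (by positivity) two_pos]
    nlinarith [sq_nonneg ‖a‖]
  linarith

theorem integral_mul_norm_sq_le_of_multiplier {E : Type*} [NormedAddCommGroup E]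
    [InnerProductSpace ℝ E] {u : ℝ → E} {g w V : ℝ → ℝ} {B K : ℝ}
    (hu : ContDiff ℝ 1 u) (hus : HasCompactSupport u) (hg : ContDiff ℝ 1 g)
    (hw : Continuous w) (hV : Continuous V) (hV0 : ∀ x, 0 ≤ V x) (hB : 0 < B) (hK : 0 ≤ K)
    (hgw : ∀ x, g x ^ 2 ≤ B * w x) (hg' : ∀ x, w x ≤ deriv g x + K * V x) :
    ∫ x, w x * ‖u x‖ ^ 2 ≤ 2 * (2 * B + K) * ∫ x, (‖deriv u x‖ ^ 2 + V x * ‖u x‖ ^ 2) := by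
  have hnsq : ContDiff ℝ 1 (‖u ·‖ ^ 2) := hu.norm_sq ℝ
  have hnsqs : HasCompactSupport (‖u ·‖ ^ 2) := hus.comp_left (g := fun z : E ↦ ‖z‖ ^ 2) (by simp)
  have hF : ContDiff ℝ 1 (fun x ↦ g x * ‖u x‖ ^ 2) := hg.mul hnsq
  have hFs : HasCompactSupport (fun x ↦ g x * ‖u x‖ ^ 2) := hnsqs.mul_left
  have hderivF (x : ℝ) : deriv (fun x ↦ g x * ‖u x‖ ^ 2) x =
      deriv g x * ‖u x‖ ^ 2 + g x * (2 * ⟪u x, deriv u x⟫) :=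
    ((hg.differentiable one_ne_zero x).hasDerivAt.mul
      (hu.differentiable one_ne_zero x).hasDerivAt.norm_sq).deriv
  have hpointwise (x : ℝ) : w x * ‖u x‖ ^ 2 ≤ 2 * (deriv (fun x ↦ g x * ‖u x‖ ^ 2) x
      + (2 * B + K) * (‖deriv u x‖ ^ 2 + V x * ‖u x‖ ^ 2)) := by
    have hcross := neg_mul_two_inner_le (u x) (deriv u x) hB (hgw x)
    have hweight := mul_le_mul_of_nonneg_right (hg' x) (sq_nonneg ‖u x‖)
    have hVu : 0 ≤ V x * ‖u x‖ ^ 2 := mul_nonneg (hV0 x) (sq_nonneg _)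
    rw [hderivF]
    linarith [mul_nonneg hK (sq_nonneg ‖deriv u x‖), mul_nonneg hB.le hVu]
  have hlhs : Integrable (fun x ↦ w x * ‖u x‖ ^ 2) :=
    (hw.mul hnsq.continuous).integrable_of_hasCompactSupport hnsqs.mul_left
  have hu' : Continuous (‖deriv u ·‖ ^ 2) := (hu.continuous_deriv le_rfl).norm.pow 2
  have hu's : HasCompactSupport (‖deriv u ·‖ ^ 2) :=
    hus.deriv.comp_left (g := fun z : E ↦ ‖z‖ ^ 2) (by simp)
  have hrhs : Integrable (fun x ↦ ‖deriv u x‖ ^ 2 + V x * ‖u x‖ ^ 2) :=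
    (hu'.add (hV.mul hnsq.continuous)).integrable_of_hasCompactSupport (hu's.add hnsqs.mul_left)
  have hderivFi : Integrable (deriv (fun x ↦ g x * ‖u x‖ ^ 2)) :=
    (hF.continuous_deriv le_rfl).integrable_of_hasCompactSupport hFs.deriv
  calc ∫ x, w x * ‖u x‖ ^ 2
      ≤ ∫ x, 2 * (deriv (fun x ↦ g x * ‖u x‖ ^ 2) x
          + (2 * B + K) * (‖deriv u x‖ ^ 2 + V x * ‖u x‖ ^ 2)) :=
        integral_mono hlhs ((hderivFi.add (hrhs.const_mul _)).const_mul 2) hpointwise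
    _ = 2 * (2 * B + K) * ∫ x, (‖deriv u x‖ ^ 2 + V x * ‖u x‖ ^ 2) := by
        rw [integral_const_mul, integral_add hderivFi (hrhs.const_mul _),
          integral_deriv_eq_zero_of_hasCompactSupport hF hFs, integral_const_mul]
        ring

noncomputable def hardyMultiplier (x : ℝ) : ℝ := -8 * x / (1 + 4 * x ^ 2)

theorem hasDerivAt_hardyMultiplier (x : ℝ) :
    HasDerivAt hardyMultiplier ((32 * x ^ 2 - 8) / (1 + 4 * x ^ 2) ^ 2) x := by
  have hden : HasDerivAt (fun x : ℝ ↦ 1 + 4 * x ^ 2) (8 * x) x :=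
    (((hasDerivAt_pow 2 x).const_mul 4).const_add 1).congr_deriv (by ring)
  exact (((hasDerivAt_id x).const_mul (-8)).div hden (by positivity)).congr_deriv
    (by simp only [id]; ring)

theorem contDiff_hardyMultiplier : ContDiff ℝ 1 hardyMultiplier :=
  (contDiff_const.mul contDiff_id).div (contDiff_const.add (contDiff_const.mul (contDiff_id.pow 2)))
    fun _ ↦ by positivity

theorem hardyMultiplier_sq_le (x : ℝ) : hardyMultiplier x ^ 2 ≤ 8 * (1 + x ^ 2)⁻¹ := by
  rw [hardyMultiplier, div_pow, ← div_eq_mul_inv, div_le_div_iff₀ (by positivity) (by positivity)]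
  nlinarith [sq_nonneg x, sq_nonneg (x ^ 2)]

theorem inv_one_add_sq_le_deriv_hardyMultiplier {x : ℝ} (hx : 1 ≤ |x|) :
    (1 + x ^ 2)⁻¹ ≤ deriv hardyMultiplier x := by
  rw [(hasDerivAt_hardyMultiplier x).deriv, inv_eq_one_div,
    div_le_div_iff₀ (by positivity) (by positivity)]
  nlinarith [(one_le_sq_iff_one_le_abs x).mpr hx]

theorem neg_eight_le_deriv_hardyMultiplier (x : ℝ) : -8 ≤ deriv hardyMultiplier x := by
  rw [(hasDerivAt_hardyMultiplier x).deriv, le_div_iff₀ (by positivity)]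
  nlinarith [sq_nonneg x, sq_nonneg (x ^ 2)]

theorem inv_one_add_sq_le_deriv_hardyMultiplier_add {m a x : ℝ} (hm : 0 < m)
    (ha : |x| ≤ 1 → m ≤ a) : (1 + x ^ 2)⁻¹ ≤ deriv hardyMultiplier x + 9 / m ^ 2 * a ^ 2 := by
  rcases le_or_gt |x| 1 with hx | hx
  · have hma : m ^ 2 ≤ a ^ 2 := pow_le_pow_left₀ hm.le (ha hx) 2
    have h9 : 9 ≤ 9 / m ^ 2 * a ^ 2 := by
      rw [div_mul_eq_mul_div, le_div_iff₀ (by positivity)]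
      linarith
    have hinv : (1 + x ^ 2)⁻¹ ≤ 1 := inv_le_one_of_one_le₀ (by nlinarith)
    linarith [neg_eight_le_deriv_hardyMultiplier x]
  · linarith [inv_one_add_sq_le_deriv_hardyMultiplier hx.le,
      mul_nonneg (by positivity : 0 ≤ 9 / m ^ 2) (sq_nonneg a)]

/-- One-dimensional Hardy-type inequality: if `α ≥ 0` is continuous with
`α ≥ m > 0` on `[-1,1]`, then `∫ ⟨x⟩⁻² |u|² ≤ C ∫ (|u'|² + α²|u|²)` for all compactly supported
`C¹` functions `u`, with `C` depending only on `m`. -/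
theorem hardy_type_inequality :
    ∀ m : ℝ, 0 < m → ∃ C : ℝ, 0 < C ∧
      ∀ α : ℝ → ℝ, Continuous α → (∀ x : ℝ, 0 ≤ α x) → (∀ x : ℝ, |x| ≤ 1 → m ≤ α x) →
        ∀ u : ℝ → ℂ, ContDiff ℝ 1 u → HasCompactSupport u →
          (∫ x : ℝ, (1 + x ^ 2)⁻¹ * ‖u x‖ ^ 2)
            ≤ C * ∫ x : ℝ, (‖deriv u x‖ ^ 2 + (α x) ^ 2 * ‖u x‖ ^ 2) := by
  intro m hm
  refine ⟨2 * (2 * 8 + 9 / m ^ 2), by positivity, ?_⟩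
  intro α hα _ hαm u hu hus
  have hweight : Continuous fun x : ℝ ↦ (1 + x ^ 2)⁻¹ :=
    (continuous_const.add (continuous_pow 2)).inv₀ fun x ↦ (by positivity : (0 : ℝ) < 1 + x ^ 2).ne'
  exact integral_mul_norm_sq_le_of_multiplier (V := fun x ↦ α x ^ 2) hu hus
    contDiff_hardyMultiplier hweight (hα.pow 2)
    (fun x ↦ sq_nonneg _) (by norm_num) (by positivity) hardyMultiplier_sq_le
    fun x ↦ inv_one_add_sq_le_deriv_hardyMultiplier_add hm (hαm x)
end

section
/- Let ℓ ∈ ℝ, R₁ < R₂, let u₀ : ℝ → ℂ be continuously differentiable, u₁ : ℝ → ℂ continuous, both vanishing outside [R₁,R₂], and assume ∫_ℝ ( u₁(τ) − iℓ u₀(τ) ) dτ = 0. Define u₀^in(x) := (1/2) ∫_x^∞ ( −u₀'(τ) − ( u₁(τ) − iℓ u₀(τ) ) ) dτ, u₁^in := (1/2)( u₁ − iℓ u₀ + u₀' ) + iℓ u₀^in, u₀^out(x) := (1/2) ∫_{−∞}^x ( u₀'(τ) − ( u₁(τ) − iℓ u₀(τ) ) ) dτ, and u₁^out := (1/2)(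 u₁ − iℓ u₀ − u₀' ) + iℓ u₀^out. Then: (i) u₀ = u₀^in + u₀^out and u₁ = u₁^in + u₁^out; (ii) (u₀^in, u₁^in) is incoming, i.e. u₁^in = (u₀^in)' + iℓ u₀^in, and (u₀^out, u₁^out) is outgoing, i.e. u₁^out = −(u₀^out)' + iℓ u₀^out; (iii) u₀^in and u₁^in vanish on [R₂, ∞), and u₀^out and u₁^out vanish on (−∞, R₁]. Moreover this decomposition into an incoming and an outgoing pair is unique: if both (v₀,v₁) is incoming and outgoing with v₀ vanishing at infinity, then v₀ = v₁ = 0. -/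
/-!
Write f = u₁ - iℓu₀. Then u₀^in and u₀^out are half the tail integrals of -u₀' - f over (x, ∞)
and of u₀' - f over (-∞, x). Differentiating a tail integral returns the integrand (up to sign),
which is exactly the incoming, resp. outgoing, relation. Adding the two tails gives 2u₀: the
u₀' parts give u₀ each because u₀ has compact support, and the f parts cancel because f has total
integral zero. Both integrands are continuous and vanish off [R₁, R₂], hence also at R₁ and R₂,
which gives the support claims. A pair that is both incoming and outgoing has v₀' = 0, so v₀ is
constant, and zero since it vanishes at infinity.
-/

open Complex MeasureTheory Filter Set

noncomputable section

theorem Continuous.eq_zero_of_notMem_Ioo {E : Type*} [TopologicalSpace E] [T2Space E] [Zero E]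
    {g : ℝ → E} (hg : Continuous g) {a b : ℝ}
    (h : ∀ x ∉ Icc a b, g x = 0) : ∀ x ∉ Ioo a b, g x = 0 := by
  have hclosure : closure (Icc a b)ᶜ ⊆ {x | g x = 0} :=
    closure_minimal h (isClosed_eq hg continuous_const)
  rwa [closure_compl, interior_Icc] at hclosure

section RealLine

variable {E : Type*} [NormedAddCommGroup E] [NormedSpace ℝ E]

theorem deriv_eq_zero_of_notMem_Icc {u : ℝ → E} {a b : ℝ} (h : ∀ x ∉ Icc a b, u x = 0)
    {x : ℝ} (hx : x ∉ Icc a b) : deriv u x = 0 := by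
  have hu : u =ᶠ[nhds x] fun _ => 0 := eventually_of_mem (isClosed_Icc.isOpen_compl.mem_nhds hx) h
  rw [hu.deriv_eq, deriv_const]

theorem integral_Ioi_eq_zero_of_notMem_Ioo {g : ℝ → E} {a b x : ℝ}
    (h : ∀ τ ∉ Ioo a b, g τ = 0) (hx : b ≤ x) : ∫ τ in Ioi x, g τ = 0 :=
  setIntegral_eq_zero_of_forall_eq_zero fun τ hτ =>
    h τ fun hτ' => (hx.trans (le_of_lt hτ)).not_gt hτ'.2

theorem integral_Iio_eq_zero_of_notMem_Ioo {g : ℝ → E} {a b x : ℝ}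
    (h : ∀ τ ∉ Ioo a b, g τ = 0) (hx : x ≤ a) : ∫ τ in Iio x, g τ = 0 :=
  setIntegral_eq_zero_of_forall_eq_zero fun τ hτ =>
    h τ fun hτ' => ((le_of_lt hτ).trans hx).not_gt hτ'.1

theorem integral_Ioi_eq_integral_sub_integral_Iio {g : ℝ → E} (hg : Integrable g) (x : ℝ) :
    ∫ τ in Ioi x, g τ = (∫ τ, g τ) - ∫ τ in Iio x, g τ := by
  rw [← intervalIntegral.integral_Iic_add_Ioi hg.integrableOn hg.integrableOn,
    integral_Iic_eq_integral_Iio, add_sub_cancel_left]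

variable [CompleteSpace E]

theorem hasDerivAt_integral_Iio {g : ℝ → E} (hg : Continuous g) (hgi : Integrable g) (x : ℝ) :
    HasDerivAt (fun y => ∫ τ in Iio y, g τ) (g x) x := by
  have hG : (fun y => ∫ τ in Iio y, g τ) = fun y => (∫ τ in Iio x, g τ) + ∫ τ in x..y, g τ := by
    funext y
    rw [← intervalIntegral.integral_Iio_sub_Iio' hgi.integrableOn hgi.integrableOn,
      add_sub_cancel]
  rw [hG]
  exact (hg.integral_hasStrictDerivAt x x).hasDerivAt.const_add _

theorem hasDerivAt_integral_Ioi {g : ℝ → E} (hg : Continuous g) (hgi : Integrable g) (x : ℝ) :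
    HasDerivAt (fun y => ∫ τ in Ioi y, g τ) (-g x) x := by
  rw [funext (integral_Ioi_eq_integral_sub_integral_Iio hgi)]
  exact (hasDerivAt_integral_Iio hg hgi x).const_sub _

theorem integral_Ioi_neg_deriv_sub_add_integral_Iio_deriv_sub {u f : ℝ → E}
    (hu : ContDiff ℝ 1 u) (hus : HasCompactSupport u) (hf : Integrable f)
    (h0 : ∫ τ, f τ = 0) (x : ℝ) :
    (∫ τ in Ioi x, (-deriv u τ - f τ)) + ∫ τ in Iio x, (deriv u τ - f τ) = 2 • u x := by
  have hdu : Integrable (deriv u) :=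
    (hu.continuous_deriv le_rfl).integrable_of_hasCompactSupport hus.deriv
  rw [integral_sub (f := fun τ => -deriv u τ) hdu.neg.integrableOn hf.integrableOn,
    integral_sub hdu.integrableOn hf.integrableOn, integral_neg, hus.integral_Ioi_deriv_eq hu,
    ← integral_Iic_eq_integral_Iio (f := deriv u), hus.integral_Iic_deriv_eq hu,
    integral_Ioi_eq_integral_sub_integral_Iio hf, h0]
  abel

end RealLine

def IsIncoming (ℓ : ℝ) (u₀ u₁ : ℝ → ℂ) : Prop :=
  ∀ x, u₁ x = deriv u₀ x + I * ℓ * u₀ x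

def IsOutgoing (ℓ : ℝ) (u₀ u₁ : ℝ → ℂ) : Prop :=
  ∀ x, u₁ x = -deriv u₀ x + I * ℓ * u₀ x

theorem IsIncoming.eq_zero_of_isOutgoing {ℓ : ℝ} {v₀ v₁ : ℝ → ℂ} (hin : IsIncoming ℓ v₀ v₁)
    (hout : IsOutgoing ℓ v₀ v₁) (hv : Differentiable ℝ v₀) (hlim : Tendsto v₀ atTop (nhds 0)) :
    v₀ = 0 ∧ v₁ = 0 := by
  have hderiv : ∀ x, deriv v₀ x = 0 := fun x => by linear_combination (hout x - hin x) / 2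
  have hconst : v₀ = fun _ => v₀ 0 := funext fun x => is_const_of_deriv_eq_zero hv hderiv x 0
  have hv₀_zero : v₀ 0 = 0 := tendsto_const_nhds_iff.mp (hconst ▸ hlim)
  have hv₀ : v₀ = 0 := hconst.trans (funext fun _ => hv₀_zero)
  refine ⟨hv₀, funext fun x => ?_⟩
  simp [hin x, hv₀]

theorem incoming_outgoing_decomposition_general
    (ℓ R₁ R₂ : ℝ)
    (u₀ u₁ : ℝ → ℂ) (hu₀ : ContDiff ℝ 1 u₀) (hu₁ : Continuous u₁)
    (hsupp : ∀ x : ℝ, x ∉ Set.Icc R₁ R₂ → u₀ x = 0 ∧ u₁ x = 0)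
    (hint : (∫ τ : ℝ, (u₁ τ - Complex.I * (ℓ : ℂ) * u₀ τ)) = 0)
    (u₀in u₁in u₀out u₁out : ℝ → ℂ)
    (hdef₀in : ∀ x : ℝ, u₀in x =
      (1 / 2 : ℂ) * ∫ τ in Set.Ioi x, (-(deriv u₀ τ) - (u₁ τ - Complex.I * (ℓ : ℂ) * u₀ τ)))
    (hdef₁in : ∀ x : ℝ, u₁in x =
      (1 / 2 : ℂ) * (u₁ x - Complex.I * (ℓ : ℂ) * u₀ x + deriv u₀ x)
        + Complex.I * (ℓ : ℂ) * u₀in x)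
    (hdef₀out : ∀ x : ℝ, u₀out x =
      (1 / 2 : ℂ) * ∫ τ in Set.Iio x, (deriv u₀ τ - (u₁ τ - Complex.I * (ℓ : ℂ) * u₀ τ)))
    (hdef₁out : ∀ x : ℝ, u₁out x =
      (1 / 2 : ℂ) * (u₁ x - Complex.I * (ℓ : ℂ) * u₀ x - deriv u₀ x)
        + Complex.I * (ℓ : ℂ) * u₀out x) :
    (∀ x : ℝ, u₀ x = u₀in x + u₀out x ∧ u₁ x = u₁in x + u₁out x) ∧
    (∀ x : ℝ, u₁in x = deriv u₀in x + Complex.I * (ℓ : ℂ) * u₀in x) ∧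
    (∀ x : ℝ, u₁out x = -(deriv u₀out x) + Complex.I * (ℓ : ℂ) * u₀out x) ∧
    (∀ x : ℝ, R₂ ≤ x → u₀in x = 0 ∧ u₁in x = 0) ∧
    (∀ x : ℝ, x ≤ R₁ → u₀out x = 0 ∧ u₁out x = 0) ∧
    (∀ v₀ v₁ : ℝ → ℂ, Differentiable ℝ v₀ →
      (∀ x : ℝ, v₁ x = deriv v₀ x + Complex.I * (ℓ : ℂ) * v₀ x) →
      (∀ x : ℝ, v₁ x = -(deriv v₀ x) + Complex.I * (ℓ : ℂ) * v₀ x) →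
      Tendsto v₀ atTop (nhds 0) →
      ∀ x : ℝ, v₀ x = 0 ∧ v₁ x = 0) := by
  set f : ℝ → ℂ := fun τ => u₁ τ - I * ℓ * u₀ τ
  have hf : Continuous f := hu₁.sub (continuous_const.mul hu₀.continuous)
  have hd : Continuous (deriv u₀) := hu₀.continuous_deriv le_rfl
  have hf_supp : ∀ x ∉ Icc R₁ R₂, f x = 0 := fun x hx => by simp [f, hsupp x hx]
  have hu₀_supp : HasCompactSupport u₀ := .intro isCompact_Icc fun x hx => (hsupp x hx).1
  have hd_supp : ∀ x ∉ Icc R₁ R₂, deriv u₀ x = 0 :=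
    fun x => deriv_eq_zero_of_notMem_Icc fun y hy => (hsupp y hy).1
  have hfi : Integrable f := hf.integrable_of_hasCompactSupport (.intro isCompact_Icc hf_supp)
  have hdi : Integrable (deriv u₀) := hd.integrable_of_hasCompactSupport hu₀_supp.deriv
  have hin_zero : ∀ x ∉ Ioo R₁ R₂, -deriv u₀ x - f x = 0 := (hd.neg.sub hf).eq_zero_of_notMem_Ioo
    fun x hx => by simp [hd_supp x hx, hf_supp x hx]
  have hout_zero : ∀ x ∉ Ioo R₁ R₂, deriv u₀ x - f x = 0 := (hd.sub hf).eq_zero_of_notMem_Ioo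
    fun x hx => by simp [hd_supp x hx, hf_supp x hx]
  have hin' : ∀ x, HasDerivAt u₀in (1 / 2 * -(-deriv u₀ x - f x)) x := fun x =>
    funext hdef₀in ▸ (hasDerivAt_integral_Ioi (hd.neg.sub hf) (hdi.neg.sub hfi) x).const_mul _
  have hout' : ∀ x, HasDerivAt u₀out (1 / 2 * (deriv u₀ x - f x)) x := fun x =>
    funext hdef₀out ▸ (hasDerivAt_integral_Iio (hd.sub hf) (hdi.sub hfi) x).const_mul _
  have hsum : ∀ x, u₀ x = u₀in x + u₀out x := fun x => by
    rw [hdef₀in, hdef₀out, ← mul_add,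
      integral_Ioi_neg_deriv_sub_add_integral_Iio_deriv_sub hu₀ hu₀_supp hfi hint]
    ring
  refine ⟨fun x => ⟨hsum x, ?_⟩, fun x => ?_, fun x => ?_, fun x hx => ?_, fun x hx => ?_,
    fun v₀ v₁ hv hvin hvout hlim x => ?_⟩
  · rw [hdef₁in, hdef₁out]; linear_combination I * ℓ * hsum x
  · rw [hdef₁in, (hin' x).deriv]; ring
  · rw [hdef₁out, (hout' x).deriv]; ring
  · have hz : u₀in x = 0 := by
      rw [hdef₀in, integral_Ioi_eq_zero_of_notMem_Ioo hin_zero hx, mul_zero]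
    exact ⟨hz, by rw [hdef₁in, hz]; linear_combination -hin_zero x (fun h => hx.not_gt h.2) / 2⟩
  · have hz : u₀out x = 0 := by
      rw [hdef₀out, integral_Iio_eq_zero_of_notMem_Ioo hout_zero hx, mul_zero]
    exact ⟨hz, by rw [hdef₁out, hz]; linear_combination -hout_zero x (fun h => hx.not_gt h.1) / 2⟩
  · obtain ⟨hv₀, hv₁⟩ := IsIncoming.eq_zero_of_isOutgoing hvin hvout hv hlim
    exact ⟨congrFun hv₀ x, congrFun hv₁ x⟩

/-- Decomposition of compactly supported data of total zero charge into an
incoming and an outgoing pair, with the stated support properties, and uniqueness of such a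
decomposition. -/
theorem incoming_outgoing_decomposition
    (ℓ R₁ R₂ : ℝ) (hR : R₁ < R₂)
    (u₀ u₁ : ℝ → ℂ) (hu₀ : ContDiff ℝ 1 u₀) (hu₁ : Continuous u₁)
    (hsupp : ∀ x : ℝ, x ∉ Set.Icc R₁ R₂ → u₀ x = 0 ∧ u₁ x = 0)
    (hint : (∫ τ : ℝ, (u₁ τ - Complex.I * (ℓ : ℂ) * u₀ τ)) = 0)
    (u₀in u₁in u₀out u₁out : ℝ → ℂ)
    (hdef₀in : ∀ x : ℝ, u₀in x =
      (1 / 2 : ℂ) * ∫ τ in Set.Ioi x, (-(deriv u₀ τ) - (u₁ τ - Complex.I * (ℓ : ℂ) * u₀ τ)))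
    (hdef₁in : ∀ x : ℝ, u₁in x =
      (1 / 2 : ℂ) * (u₁ x - Complex.I * (ℓ : ℂ) * u₀ x + deriv u₀ x)
        + Complex.I * (ℓ : ℂ) * u₀in x)
    (hdef₀out : ∀ x : ℝ, u₀out x =
      (1 / 2 : ℂ) * ∫ τ in Set.Iio x, (deriv u₀ τ - (u₁ τ - Complex.I * (ℓ : ℂ) * u₀ τ)))
    (hdef₁out : ∀ x : ℝ, u₁out x =
      (1 / 2 : ℂ) * (u₁ x - Complex.I * (ℓ : ℂ) * u₀ x - deriv u₀ x)
        + Complex.I * (ℓ : ℂ) * u₀out x) :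
    (∀ x : ℝ, u₀ x = u₀in x + u₀out x ∧ u₁ x = u₁in x + u₁out x) ∧
    (∀ x : ℝ, u₁in x = deriv u₀in x + Complex.I * (ℓ : ℂ) * u₀in x) ∧
    (∀ x : ℝ, u₁out x = -(deriv u₀out x) + Complex.I * (ℓ : ℂ) * u₀out x) ∧
    (∀ x : ℝ, R₂ ≤ x → u₀in x = 0 ∧ u₁in x = 0) ∧
    (∀ x : ℝ, x ≤ R₁ → u₀out x = 0 ∧ u₁out x = 0) ∧
    (∀ v₀ v₁ : ℝ → ℂ, Differentiable ℝ v₀ →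
      (∀ x : ℝ, v₁ x = deriv v₀ x + Complex.I * (ℓ : ℂ) * v₀ x) →
      (∀ x : ℝ, v₁ x = -(deriv v₀ x) + Complex.I * (ℓ : ℂ) * v₀ x) →
      Tendsto v₀ atTop (nhds 0) →
      ∀ x : ℝ, v₀ x = 0 ∧ v₁ x = 0) :=
  incoming_outgoing_decomposition_general ℓ R₁ R₂ u₀ u₁ hu₀ hu₁ hsupp hint u₀in u₁in u₀out u₁out
    hdef₀in hdef₁in hdef₀out hdef₁out
end
end
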